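/- Let G be a finite connected simple graph on n ≥ 2 vertices whose resistance curvature is nonnegative (κ_i ≥ 0 for all i) with Σ_{v∈V} κ_v > 0. Then for every probability measure μ on V (i.e., μ : V → ℝ with μ(v) ≥ 0 and Σ_v μ(v) = 1) there exist vertices a and b such that Σ_{v∈V} Ω_{av}·μ(v) ≤ 1/(Σ_{v∈V} κ_v) ≤ Σ_{v∈V} Ω_{bv}·μ(v). -/

import Mathlib

/-!
Since `Ω` is symmetric and `Ω κ = 1`, pairing `κ` with the potential `f = Ω μ` gives
`∑ κᵢ fᵢ = μ ⬝ (Ω κ) = ∑ μ = 1`. For `κ ≥ 0` with positive total mass, `(∑ κ)⁻¹` is thus the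
`κ`-weighted mean of `f`, which lies between the minimum and the maximum of `f`.
-/

open Finset SimpleGraph Matrix

/-- The resistance matrix of a graph: `Ω i j = Γ⁻¹ i i + Γ⁻¹ j j - 2 Γ⁻¹ i j`
where `Γ = L + (1/n) J` with `L` the Laplacian and `J` the all-ones matrix. -/
noncomputable def resistanceMatrix {V : Type*} [Fintype V] [DecidableEq V]
    (G : SimpleGraph V) [DecidableRel G.Adj] : Matrix V V ℝ :=
  Matrix.of fun i j =>
    letI Γinv := (G.lapMatrix ℝ + Matrix.of fun _ _ => (1 : ℝ) / Fintype.card V)⁻¹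
    Γinv i i + Γinv j j - 2 * Γinv i j

namespace Finset

variable {ι R α : Type*} [Field R] [LinearOrder R]
  [AddCommGroup α] [LinearOrder α] [IsOrderedAddMonoid α] [Module R α] [PosSMulMono R α]

theorem exists_le_centerMass {s : Finset ι} {f : ι → α} {w : ι → R}
    (hw₀ : ∀ i ∈ s, 0 ≤ w i) (hw₁ : 0 < ∑ i ∈ s, w i) : ∃ i ∈ s, f i ≤ s.centerMass w f := by
  obtain ⟨i, hi, hmin⟩ := exists_mem_eq_inf' (nonempty_of_sum_ne_zero hw₁.ne') f
  exact ⟨i, hi, hmin ▸ inf_le_centerMass hw₀ hw₁⟩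

theorem exists_centerMass_le {s : Finset ι} {f : ι → α} {w : ι → R}
    (hw₀ : ∀ i ∈ s, 0 ≤ w i) (hw₁ : 0 < ∑ i ∈ s, w i) : ∃ i ∈ s, s.centerMass w f ≤ f i := by
  obtain ⟨i, hi, hmax⟩ := exists_mem_eq_sup' (nonempty_of_sum_ne_zero hw₁.ne') f
  exact ⟨i, hi, hmax ▸ centerMass_le_sup hw₀ hw₁⟩

end Finset

theorem Matrix.IsSymm.dotProduct_mulVec_eq_sum {n R : Type*} [Fintype n] [CommSemiring R]
    {A : Matrix n n R} (hA : A.IsSymm) {κ : n → R} (hκ : A *ᵥ κ = fun _ => 1) (μ : n → R) :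
    κ ⬝ᵥ (A *ᵥ μ) = ∑ i, μ i := by
  rw [dotProduct_mulVec, ← mulVec_transpose, hA.eq, hκ, dotProduct_comm]
  simp [dotProduct]

theorem resistanceMatrix_isSymm {V : Type*} [Fintype V] [DecidableEq V]
    (G : SimpleGraph V) [DecidableRel G.Adj] : (resistanceMatrix G).IsSymm := by
  set Γ := G.lapMatrix ℝ + Matrix.of fun _ _ => (1 : ℝ) / Fintype.card V
  have hΓinv : Γ⁻¹.IsSymm := by
    have hΓ : Γ.IsSymm := (isSymm_lapMatrix (R := ℝ) G).add (by ext; rfl)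
    rw [IsSymm, transpose_nonsing_inv, hΓ.eq]
  ext i j
  simp only [resistanceMatrix, transpose_apply, of_apply, hΓinv.apply i j, Γ]
  ring

theorem exists_minimax_vertices_of_nonneg_curvature_general
    {V : Type*} [Fintype V] [DecidableEq V]
    (G : SimpleGraph V) [DecidableRel G.Adj]
    (κ : V → ℝ) (hκ : resistanceMatrix G *ᵥ κ = fun _ => 1)
    (hcurv : ∀ i, 0 ≤ κ i) (hsum : 0 < ∑ v, κ v)
    (μ : V → ℝ) (hμ1 : ∑ v, μ v = 1) :
    ∃ a b : V,
      ∑ v, resistanceMatrix G a v * μ v ≤ (∑ v, κ v)⁻¹ ∧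
      (∑ v, κ v)⁻¹ ≤ ∑ v, resistanceMatrix G b v * μ v := by
  have hmean : univ.centerMass κ (resistanceMatrix G *ᵥ μ) = (∑ v, κ v)⁻¹ := by
    have hpair := (resistanceMatrix_isSymm G).dotProduct_mulVec_eq_sum hκ μ
    rw [hμ1, dotProduct] at hpair
    simp only [centerMass, smul_eq_mul, hpair, mul_one]
  obtain ⟨a, -, ha⟩ := exists_le_centerMass (f := resistanceMatrix G *ᵥ μ) (fun i _ => hcurv i) hsum
  obtain ⟨b, -, hb⟩ := exists_centerMass_le (f := resistanceMatrix G *ᵥ μ) (fun i _ => hcurv i) hsum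
  exact ⟨a, b, hmean ▸ ha, hmean ▸ hb⟩

/-- Minimax theorem for graphs with nonnegative resistance curvature: for every
probability measure `μ` on the vertices there are vertices `a, b` with
`∑ v, Ω a v · μ v ≤ 1/(∑ κ) ≤ ∑ v, Ω b v · μ v`. -/
theorem exists_minimax_vertices_of_nonneg_curvature
    {V : Type*} [Fintype V] [DecidableEq V]
    (G : SimpleGraph V) [DecidableRel G.Adj]
    (hconn : G.Connected) (hn : 2 ≤ Fintype.card V)
    (κ : V → ℝ) (hκ : resistanceMatrix G *ᵥ κ = fun _ => 1)
    (hcurv : ∀ i, 0 ≤ κ i) (hsum : 0 < ∑ v, κ v)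
    (μ : V → ℝ) (hμ0 : ∀ v, 0 ≤ μ v) (hμ1 : ∑ v, μ v = 1) :
    ∃ a b : V,
      ∑ v, resistanceMatrix G a v * μ v ≤ (∑ v, κ v)⁻¹ ∧
      (∑ v, κ v)⁻¹ ≤ ∑ v, resistanceMatrix G b v * μ v :=
  exists_minimax_vertices_of_nonneg_curvature_general G κ hκ hcurv hsum μ hμ1
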